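/- arXiv:2111.03402 — 10 statements merged into one kernel-verified Lean document; each statement's English description precedes it below -/
import Mathlib

section
/- For any two positive real numbers a and b, one has √(ab)·(1 + (1/8)·(ln(a/b))²) ≤ (a + b)/2. -/
lemma cosh_ge_quadratic (s : ℝ) : 1 + s ^ 2 / 2 ≤ Real.cosh s := by
  wlog hs : 0 ≤ s with H
  · have := H (-s) (by linarith)
    simpa using this
  have h1 : s / 2 ≤ Real.sinh (s / 2) := Real.self_le_sinh_iff.2 (by linarith)
  have hs2 : 0 ≤ s / 2 := by linarith
  have h2 : Real.cosh s = 2 * Real.sinh (s / 2) ^ 2 + 1 := by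
    rw [show s = 2 * (s / 2) by ring, Real.cosh_two_mul, Real.cosh_sq]
    ring
  nlinarith [h1]

theorem amgm_log_refinement (a b : ℝ) (ha : 0 < a) (hb : 0 < b) :
    Real.sqrt (a * b) * (1 + (1 / 8) * (Real.log (a / b)) ^ 2) ≤ (a + b) / 2 := by
  set x := Real.log a with hx
  set y := Real.log b with hy
  have hax : a = Real.exp x := (Real.exp_log ha).symm
  have hby : b = Real.exp y := (Real.exp_log hb).symm
  have hlog : Real.log (a / b) = x - y := Real.log_div ha.ne' hb.ne'
  have hsqrt : Real.sqrt (a * b) = Real.exp ((x + y) / 2) := by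
    rw [hax, hby, ← Real.exp_add,
      show Real.exp (x + y) = Real.exp ((x + y) / 2) ^ 2 by
        rw [sq, ← Real.exp_add]; ring_nf,
      Real.sqrt_sq (Real.exp_nonneg _)]
  rw [hsqrt, hlog, hax, hby]
  set s := (x - y) / 2 with hs
  have hcosh := cosh_ge_quadratic s
  rw [Real.cosh_eq] at hcosh
  have hx' : Real.exp x = Real.exp ((x + y) / 2) * Real.exp s := by
    rw [← Real.exp_add]; congr 1; rw [hs]; ring
  have hy' : Real.exp y = Real.exp ((x + y) / 2) * Real.exp (-s) := by
    rw [← Real.exp_add]; congr 1; rw [hs]; ring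
  rw [hx', hy']
  have hpos : 0 < Real.exp ((x + y) / 2) := Real.exp_pos _
  have : (1 : ℝ) + 1 / 8 * (x - y) ^ 2 = 1 + s ^ 2 / 2 := by rw [hs]; ring
  rw [this]
  calc Real.exp ((x + y) / 2) * (1 + s ^ 2 / 2)
      ≤ Real.exp ((x + y) / 2) * ((Real.exp s + Real.exp (-s)) / 2) := by
        exact mul_le_mul_of_nonneg_left hcosh hpos.le
    _ = (Real.exp ((x + y) / 2) * Real.exp s + Real.exp ((x + y) / 2) * Real.exp (-s)) / 2 := by
        ring
end

section
/- For any real numbers a, b > 0, one has √(ab) ≤ √(ab)·(1 + (1/2)·((a − b)/(a + b))²) ≤ (a + b)/2. -/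
theorem amgm_refinement (a b : ℝ) (ha : 0 < a) (hb : 0 < b) :
    Real.sqrt (a * b) ≤ Real.sqrt (a * b) * (1 + (1 / 2) * ((a - b) / (a + b)) ^ 2) ∧
      Real.sqrt (a * b) * (1 + (1 / 2) * ((a - b) / (a + b)) ^ 2) ≤ (a + b) / 2 := by
  have hab : 0 < a + b := by linarith
  set s := Real.sqrt (a * b) with hs_def
  have hs : 0 ≤ s := Real.sqrt_nonneg _
  have hs2 : s ^ 2 = a * b := Real.sq_sqrt (by positivity)
  have hst : s ≤ (a + b) / 2 := by
    have h1 : a * b ≤ ((a + b) / 2) ^ 2 := by nlinarith [sq_nonneg (a - b)]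
    calc s ≤ Real.sqrt (((a + b) / 2) ^ 2) := Real.sqrt_le_sqrt h1
      _ = (a + b) / 2 := Real.sqrt_sq (by linarith)
  constructor
  · nlinarith [sq_nonneg ((a - b) / (a + b))]
  · rw [div_pow, ← sub_nonneg]
    have key : (a + b) / 2 - s * (1 + 1 / 2 * ((a - b) ^ 2 / (a + b) ^ 2)) =
        (2 * ((a + b) / 2 - s) ^ 2 * ((a + b) + s)) / (a + b) ^ 2 := by
      have h4 : (a - b) ^ 2 = (a + b) ^ 2 - 4 * s ^ 2 := by rw [hs2]; ring
      rw [h4]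
      field_simp
      ring
    rw [key]
    positivity
end

section
/- For any real number x > 0, one has √x·(1 + (1/2)·((x − 1)/(x + 1))²) ≤ √x·(1 + (1/8)·(ln x)²) ≤ (x + 1)/2. -/
/-!
Substituting `x = exp (2 t)` turns `√x` into `exp t`, `log x` into `2 t`, `(x - 1) / (x + 1)` into
`tanh t` and `(x + 1) / 2` into `exp t * cosh t`. The two inequalities become `|tanh t| ≤ |t|` and
`1 + t ^ 2 / 2 ≤ cosh t`, and both follow by comparing the power series of `sinh` and `cosh`.
-/

open Real Finset

namespace Real

theorem one_add_sq_div_two_le_cosh (t : ℝ) : 1 + t ^ 2 / 2 ≤ cosh t := by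
  have h := sum_le_hasSum (range 2) (fun n _ ↦ by rw [pow_mul]; positivity) (hasSum_cosh t)
  simpa [sum_range_succ] using h

theorem sinh_le_mul_cosh {t : ℝ} (ht : 0 ≤ t) : sinh t ≤ t * cosh t := by
  refine hasSum_le (fun n ↦ ?_) (hasSum_sinh t) ((hasSum_cosh t).mul_left t)
  rw [pow_succ', mul_div_assoc]
  gcongr
  omega

theorem abs_tanh_le_abs (t : ℝ) : |tanh t| ≤ |t| := by
  rw [tanh_eq_sinh_div_cosh, abs_div, abs_of_pos (cosh_pos t), div_le_iff₀ (cosh_pos t)]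
  rcases le_total 0 t with ht | ht
  · rw [abs_of_nonneg (sinh_nonneg_iff.2 ht), abs_of_nonneg ht]
    exact sinh_le_mul_cosh ht
  · rw [abs_of_nonpos (sinh_nonpos_iff.2 ht), abs_of_nonpos ht, ← sinh_neg, ← cosh_neg t]
    exact sinh_le_mul_cosh (neg_nonneg.2 ht)

theorem tanh_eq_exp_two_mul (t : ℝ) : tanh t = (exp (2 * t) - 1) / (exp (2 * t) + 1) := by
  rw [tanh_eq, two_mul, exp_add, exp_neg]
  field_simp

theorem exp_mul_cosh (t : ℝ) : exp t * cosh t = (exp (2 * t) + 1) / 2 := by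
  rw [cosh_eq, two_mul, exp_add, exp_neg]
  field_simp

theorem sqrt_exp_two_mul (t : ℝ) : √(exp (2 * t)) = exp t := by
  rw [mul_comm, exp_mul, rpow_two, sqrt_sq (exp_pos t).le]

end Real

theorem sqrt_frac_le_sqrt_log (x : ℝ) (hx : 0 < x) :
    Real.sqrt x * (1 + (1 / 2) * ((x - 1) / (x + 1)) ^ 2) ≤
        Real.sqrt x * (1 + (1 / 8) * (Real.log x) ^ 2) ∧
      Real.sqrt x * (1 + (1 / 8) * (Real.log x) ^ 2) ≤ (x + 1) / 2 := by
  obtain ⟨t, rfl⟩ : ∃ t, exp (2 * t) = x :=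
    ⟨log x / 2, by rw [mul_div_cancel₀ _ two_ne_zero, exp_log hx]⟩
  rw [sqrt_exp_two_mul, log_exp, ← tanh_eq_exp_two_mul, ← exp_mul_cosh,
    show 1 / 8 * (2 * t) ^ 2 = t ^ 2 / 2 by ring]
  constructor
  · have htanh : tanh t ^ 2 ≤ t ^ 2 := sq_le_sq.2 (abs_tanh_le_abs t)
    gcongr
    linarith
  · gcongr
    linarith [one_add_sq_div_two_le_cosh t]
end

section
/- For any real numbers m and x with 1 < m < x, one has √x·(1 + (1/2)·((m − 1)/(m + 1))²) ≤ (x + 1)/2. -/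
theorem sqrt_refinement_with_m (m x : ℝ) (hm : 1 < m) (hmx : m < x) :
    Real.sqrt x * (1 + (1 / 2) * ((m - 1) / (m + 1)) ^ 2) ≤ (x + 1) / 2 := by
  have hx1 : (1:ℝ) < x := hm.trans hmx
  set s := Real.sqrt x with hsdef
  have hs2 : s * s = x := Real.mul_self_sqrt (by linarith)
  have hs1 : 1 < s := by
    have := Real.lt_sqrt (x := 1) (y := x) (by norm_num)
    simpa [hsdef] using this.mpr (by linarith)
  have hm1 : (0:ℝ) < m + 1 := by linarith
  have hx1' : (0:ℝ) < x + 1 := by linarith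
  have hr0 : 0 ≤ (m - 1) / (m + 1) := div_nonneg (by linarith) hm1.le
  have hrx : (m - 1) / (m + 1) ≤ (x - 1) / (x + 1) := by
    rw [div_le_div_iff₀ hm1 hx1']
    nlinarith
  have hrsq : ((m - 1) / (m + 1)) ^ 2 ≤ ((x - 1) / (x + 1)) ^ 2 := by
    apply sq_le_sq' <;> nlinarith
  have hkey : s * ((x - 1) / (x + 1)) ^ 2 ≤ (s - 1) ^ 2 := by
    rw [div_pow, mul_div_assoc', div_le_iff₀ (by positivity)]
    have : x - 1 = (s - 1) * (s + 1) := by nlinarith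
    rw [this, ← hs2]
    have h1 : (0:ℝ) ≤ (s - 1) ^ 2 := sq_nonneg _
    have h2 : (0:ℝ) ≤ (s - 1) * (s ^ 3 - 1) := by nlinarith [sq_nonneg s, sq_nonneg (s+1)]
    nlinarith [mul_nonneg h1 h2]
  have hs0 : (0:ℝ) < s := by linarith
  nlinarith [mul_le_mul_of_nonneg_left hrsq hs0.le]
end

section
/- For any real numbers a, b, m with a > 0, m > 1 and m·a < b, one has √(ab) ≤ √(ab)·(1 + (1/2)·((m − 1)/(m + 1))²) ≤ (a + b)/2. -/
theorem amgm_refinement_with_m (a b m : ℝ) (ha : 0 < a) (hm : 1 < m) (hab : m * a < b) :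
    Real.sqrt (a * b) ≤ Real.sqrt (a * b) * (1 + (1 / 2) * ((m - 1) / (m + 1)) ^ 2) ∧
      Real.sqrt (a * b) * (1 + (1 / 2) * ((m - 1) / (m + 1)) ^ 2) ≤ (a + b) / 2 := by
  have hm0 : (0:ℝ) < m := lt_trans one_pos hm
  have hb : 0 < b := lt_trans (by positivity) hab
  set x := Real.sqrt a with hxdef
  set y := Real.sqrt b with hydef
  set u := Real.sqrt m with hudef
  have hx : 0 < x := Real.sqrt_pos.mpr ha
  have hy : 0 < y := Real.sqrt_pos.mpr hb
  have hu1 : 1 < u := by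
    nlinarith [Real.sq_sqrt hm0.le, Real.sqrt_nonneg m]
  have hxa : x ^ 2 = a := Real.sq_sqrt ha.le
  have hyb : y ^ 2 = b := Real.sq_sqrt hb.le
  have hum : u ^ 2 = m := Real.sq_sqrt hm0.le
  have hsab : Real.sqrt (a * b) = x * y := by
    rw [hxdef, hydef, ← Real.sqrt_mul ha.le]
  have hyx : u * x < y := by
    nlinarith [sq_nonneg (y - u*x), sq_nonneg (y + u*x)]
  have hden : (0:ℝ) < m + 1 := by linarith
  constructor
  · have h1 : 0 ≤ ((m - 1) / (m + 1)) ^ 2 := sq_nonneg _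
    nlinarith [Real.sqrt_nonneg (a * b)]
  · rw [hsab, ← hxa, ← hyb, ← hum, div_pow]
    have key : x * y * (u ^ 2 - 1) ^ 2 ≤ (x - y) ^ 2 * (u ^ 2 + 1) ^ 2 := by
      have hid : (x - y) ^ 2 * (u ^ 2 + 1) ^ 2 - x * y * (u ^ 2 - 1) ^ 2 =
          x^2*(u-1)^4*(u^2+u+1) + (y - u*x)*x*((u-1)*(2*u^4 - u^3 + 3*u^2 + u + 3))
            + (y - u*x)^2*(u^2+1)^2 := by ring
      have t1 : 0 ≤ x^2*(u-1)^4*(u^2+u+1) := by positivity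
      have t2 : 0 ≤ (y - u*x)*x*((u-1)*(2*u^4 - u^3 + 3*u^2 + u + 3)) := by
        apply mul_nonneg (mul_nonneg (by linarith) hx.le)
        apply mul_nonneg (by linarith)
        nlinarith [pow_pos (lt_trans one_pos hu1) 4, pow_pos (lt_trans one_pos hu1) 3]
      have t3 : 0 ≤ (y - u*x)^2*(u^2+1)^2 := by positivity
      linarith
    have h2 : (u^2-1)^2/(u^2+1)^2 ≤ (x-y)^2/(x*y) := by
      rw [div_le_div_iff₀ (by positivity) (mul_pos hx hy)]
      nlinarith [key]
    have h3 : x*y*(1 + 1/2 * ((x-y)^2/(x*y))) = (x^2+y^2)/2 := by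
      field_simp; ring
    nlinarith [mul_pos hx hy, h2, h3]
end

section
/- Let A and B be positive invertible bounded operators on a complex Hilbert space H. Then A ♯ B ≤ (A ♯ B) + (1/2)·(A ♯ B)·((A + B)⁻¹(A − B))² ≤ (A + B)/2. -/
set_option synthInstance.maxHeartbeats 1000000
set_option maxHeartbeats 1000000

open scoped InnerProductSpace

variable {H : Type*} [NormedAddCommGroup H] [InnerProductSpace ℂ H] [CompleteSpace H]

/-- The operator geometric mean `A ♯ B = A^(1/2) (A^(-1/2) B A^(-1/2))^(1/2) A^(1/2)`,
where square roots are given by the continuous functional calculus. -/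
noncomputable def geomMean (A B : H →L[ℂ] H) : H →L[ℂ] H :=
  CFC.sqrt A * CFC.sqrt (Ring.inverse (CFC.sqrt A) * B * Ring.inverse (CFC.sqrt A)) * CFC.sqrt A

/-!
Under `(A, B) ↦ (S A S, S B S)` every term of the inequalities transforms as `X ↦ S X S` (for `♯`
by its characterization as the positive solution `G` of the Riccati equation `G A⁻¹ G = B`),
so taking `S = (A + B)^(1/2)` reduces to the case `A + B = 1`. Then `B = 1 - A` commutes with `A`,
`A ♯ B = f(A)` with `f(x) = √(x(1 - x))`, and since `(2x - 1)² = 1 - 4 f(x)²` both inequalities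
become scalar ones in `u = f(x)`; the second is `u + u (1 - 4u²) / 2 ≤ 1 / 2`,
i.e. `(2u - 1)² (u + 1) ≥ 0`.
-/

open scoped Ring

theorem Ring.inverse_conj {M₀ : Type*} [MonoidWithZero M₀] {c : M₀} (hc : IsUnit c) (a : M₀) :
    (c * a * c)⁻¹ʳ = c⁻¹ʳ * a⁻¹ʳ * c⁻¹ʳ := by
  rw [Ring.inverse_mul (.inr hc), Ring.inverse_mul (.inl hc), mul_assoc]

theorem Real.sqrt_mul_one_sub_add_le (x : ℝ) :
    √(x * (1 - x)) + 1 / 2 * (√(x * (1 - x)) * (2 * x - 1) ^ 2) ≤ 1 / 2 := by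
  rcases le_total 0 (x * (1 - x)) with h | h
  · have hu := Real.sq_sqrt h
    nlinarith [mul_nonneg (sq_nonneg (2 * √(x * (1 - x)) - 1))
      (by positivity : (0 : ℝ) ≤ √(x * (1 - x)) + 1)]
  · rw [Real.sqrt_eq_zero'.2 h]
    norm_num

section CStarAlgebra

variable {𝒜 : Type*} [CStarAlgebra 𝒜] [PartialOrder 𝒜] [StarOrderedRing 𝒜]

theorem CFC.inverse_eq_inverse_sqrt_mul_inverse_sqrt {a : 𝒜} (ha : 0 ≤ a) :
    a⁻¹ʳ = (CFC.sqrt a)⁻¹ʳ * (CFC.sqrt a)⁻¹ʳ := by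
  conv_lhs => rw [← CFC.sqrt_mul_sqrt_self a]
  exact Ring.mul_inverse_rev' (.refl _)

theorem spectrum_subset_Ioc_of_le_one {a : 𝒜} (ha : 0 ≤ a) (ha' : IsUnit a) (ha₁ : a ≤ 1) :
    spectrum ℝ a ⊆ Set.Ioc 0 1 := fun x hx =>
  ⟨(spectrum_nonneg_of_nonneg ha hx).lt_of_ne fun h => spectrum.zero_notMem ℝ ha' (h ▸ hx),
    (CFC.le_one_iff a).1 ha₁ x hx⟩

theorem exists_eq_conj_and_eq_conj_one_sub {A B : 𝒜} (hA : 0 ≤ A) (hA' : IsUnit A) (hB : 0 ≤ B) :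
    ∃ S a : 𝒜, IsSelfAdjoint S ∧ IsUnit S ∧ 0 ≤ a ∧ IsUnit a ∧ a ≤ 1 ∧
      A = S * a * S ∧ B = S * (1 - a) * S := by
  have hAB : 0 ≤ A + B := add_nonneg hA hB
  have hAB' : IsUnit (A + B) := CStarAlgebra.isUnit_of_le A (le_add_of_nonneg_right hB) ⟨hA, hA'⟩
  set S := CFC.sqrt (A + B)
  have hS : IsSelfAdjoint S := .of_nonneg (CFC.sqrt_nonneg _)
  have hS' : IsUnit S := (CFC.isUnit_sqrt_iff _ hAB).2 hAB'
  have hSS : S * S = A + B := CFC.sqrt_mul_sqrt_self _ hAB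
  set a := S⁻¹ʳ * A * S⁻¹ʳ
  have hA_eq : A = S * a * S := by
    simp only [a, mul_assoc, Ring.mul_inverse_cancel_left _ _ hS', Ring.inverse_mul_cancel _ hS',
      mul_one]
  have ha₁ : a ≤ 1 := calc
    a ≤ S⁻¹ʳ * (A + B) * S⁻¹ʳ := hS.ringInverse.conjugate_le_conjugate (le_add_of_nonneg_right hB)
    _ = 1 := by
      rw [← hSS, ← mul_assoc, Ring.inverse_mul_cancel _ hS', one_mul, Ring.mul_inverse_cancel _ hS']
  refine ⟨S, a, hS, hS', hS.ringInverse.conjugate_nonneg hA,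
    (hS'.ringInverse.mul hA').mul hS'.ringInverse, ha₁, hA_eq, ?_⟩
  rw [mul_sub, sub_mul, ← hA_eq, mul_one, hSS, add_sub_cancel_left]

end CStarAlgebra

theorem geomMean_nonneg (a b : H →L[ℂ] H) : 0 ≤ geomMean a b :=
  conjugate_nonneg_of_nonneg (CFC.sqrt_nonneg _) (CFC.sqrt_nonneg a)

variable {a b : H →L[ℂ] H}

theorem geomMean_mul_inverse_mul_geomMean (ha : 0 ≤ a) (ha' : IsUnit a) (hb : 0 ≤ b) :
    geomMean a b * a⁻¹ʳ * geomMean a b = b := by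
  have hs : IsUnit (CFC.sqrt a) := (CFC.isUnit_sqrt_iff a).2 ha'
  have hc : 0 ≤ (CFC.sqrt a)⁻¹ʳ * b * (CFC.sqrt a)⁻¹ʳ :=
    (IsSelfAdjoint.of_nonneg (CFC.sqrt_nonneg a)).ringInverse.conjugate_nonneg hb
  have ht := CFC.sqrt_mul_sqrt_self _ hc
  rw [geomMean, CFC.inverse_eq_inverse_sqrt_mul_inverse_sqrt ha]
  generalize CFC.sqrt ((CFC.sqrt a)⁻¹ʳ * b * (CFC.sqrt a)⁻¹ʳ) = t at ht ⊢
  calc CFC.sqrt a * t * CFC.sqrt a * ((CFC.sqrt a)⁻¹ʳ * (CFC.sqrt a)⁻¹ʳ) *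
        (CFC.sqrt a * t * CFC.sqrt a)
      = CFC.sqrt a * (t * t) * CFC.sqrt a := by
        simp only [mul_assoc, Ring.mul_inverse_cancel_left _ _ hs,
          Ring.inverse_mul_cancel_left _ _ hs]
    _ = b := by
        rw [ht]
        simp only [mul_assoc, Ring.mul_inverse_cancel_left _ _ hs, Ring.inverse_mul_cancel _ hs,
          mul_one]

theorem geomMean_eq_of_mul_inverse_mul_eq {g : H →L[ℂ] H} (ha : 0 ≤ a) (ha' : IsUnit a)
    (hg : 0 ≤ g) (h : g * a⁻¹ʳ * g = b) : geomMean a b = g := by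
  have hs : IsUnit (CFC.sqrt a) := (CFC.isUnit_sqrt_iff a).2 ha'
  have hx : 0 ≤ (CFC.sqrt a)⁻¹ʳ * g * (CFC.sqrt a)⁻¹ʳ :=
    (IsSelfAdjoint.of_nonneg (CFC.sqrt_nonneg a)).ringInverse.conjugate_nonneg hg
  have hsqrt : CFC.sqrt ((CFC.sqrt a)⁻¹ʳ * b * (CFC.sqrt a)⁻¹ʳ) =
      (CFC.sqrt a)⁻¹ʳ * g * (CFC.sqrt a)⁻¹ʳ := by
    rw [← CFC.sqrt_mul_self _ hx, ← h, CFC.inverse_eq_inverse_sqrt_mul_inverse_sqrt ha]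
    simp only [mul_assoc]
  rw [geomMean, hsqrt]
  simp only [mul_assoc, Ring.mul_inverse_cancel_left _ _ hs, Ring.inverse_mul_cancel _ hs, mul_one]

theorem geomMean_conj {c : H →L[ℂ] H} (ha : 0 ≤ a) (ha' : IsUnit a) (hb : 0 ≤ b)
    (hc : IsSelfAdjoint c) (hc' : IsUnit c) :
    geomMean (c * a * c) (c * b * c) = c * geomMean a b * c := by
  refine geomMean_eq_of_mul_inverse_mul_eq (hc.conjugate_nonneg ha) ((hc'.mul ha').mul hc')
    (hc.conjugate_nonneg (geomMean_nonneg a b)) ?_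
  conv_rhs => rw [← geomMean_mul_inverse_mul_geomMean ha ha' hb]
  rw [Ring.inverse_conj hc']
  simp only [mul_assoc, Ring.mul_inverse_cancel_left _ _ hc', Ring.inverse_mul_cancel_left _ _ hc']

theorem geomMean_one_sub_eq_cfc (ha : 0 ≤ a) (ha' : IsUnit a) (ha₁ : a ≤ 1) :
    geomMean a (1 - a) = cfc (fun x : ℝ => √(x * (1 - x))) a := by
  refine geomMean_eq_of_mul_inverse_mul_eq ha ha' (cfc_nonneg fun _ _ => Real.sqrt_nonneg _) ?_
  have hspec := spectrum_subset_Ioc_of_le_one ha ha' ha₁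
  have hne : ∀ x ∈ spectrum ℝ a, x ≠ 0 := fun x hx => (hspec hx).1.ne'
  have hinv : a⁻¹ʳ = cfc (fun x : ℝ => x⁻¹) a := by
    rw [cfc_inv (fun x : ℝ => x) a hne, cfc_id' ℝ a]
  have hsub : 1 - a = cfc (fun x : ℝ => 1 - x) a := by
    rw [cfc_sub .., cfc_const_one ℝ a, cfc_id' ℝ a]
  rw [hinv, hsub, ← cfc_mul _ _ a (by fun_prop) (by fun_prop (disch := exact hne)),
    ← cfc_mul _ _ a (by fun_prop (disch := exact hne))]
  refine cfc_congr fun x hx => ?_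
  obtain ⟨hx₀, hx₁⟩ := hspec hx
  rw [mul_right_comm, Real.mul_self_sqrt (by nlinarith), mul_right_comm, mul_inv_cancel₀ hx₀.ne',
    one_mul]

def AMGMRefinement (a b : H →L[ℂ] H) : Prop :=
  geomMean a b ≤ geomMean a b + (1 / 2 : ℝ) • (geomMean a b * ((a + b)⁻¹ʳ * (a - b)) ^ 2) ∧
    geomMean a b + (1 / 2 : ℝ) • (geomMean a b * ((a + b)⁻¹ʳ * (a - b)) ^ 2) ≤
      (1 / 2 : ℝ) • (a + b)

theorem amgmRefinement_one_sub (ha : 0 ≤ a) (ha' : IsUnit a) (ha₁ : a ≤ 1) :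
    AMGMRefinement a (1 - a) := by
  have hdiff : a - (1 - a) = cfc (fun x : ℝ => 2 * x - 1) a := by
    rw [cfc_sub .., cfc_const_mul .., cfc_id' ℝ a, cfc_const_one ℝ a, two_smul]
    abel
  have hhalf : (1 / 2 : ℝ) • (1 : H →L[ℂ] H) = algebraMap ℝ _ (1 / 2) :=
    (Algebra.algebraMap_eq_smul_one _).symm
  rw [AMGMRefinement, add_sub_cancel, Ring.inverse_one, one_mul, hdiff,
    geomMean_one_sub_eq_cfc ha ha' ha₁, ← cfc_pow .., ← cfc_mul .., ← cfc_smul .., ← cfc_add ..,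
    hhalf]
  refine ⟨cfc_mono fun x _ => ?_, cfc_le_algebraMap _ _ _ fun x _ => ?_⟩
  · rw [smul_eq_mul]
    exact le_add_of_nonneg_right (by positivity)
  · exact Real.sqrt_mul_one_sub_add_le x

theorem AMGMRefinement.conj {c : H →L[ℂ] H} (ha : 0 ≤ a) (ha' : IsUnit a) (hb : 0 ≤ b)
    (hc : IsSelfAdjoint c) (hc' : IsUnit c) (h : AMGMRefinement a b) :
    AMGMRefinement (c * a * c) (c * b * c) := by
  have hdiff : ((c * a * c + c * b * c)⁻¹ʳ * (c * a * c - c * b * c)) ^ 2 =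
      c⁻¹ʳ * ((a + b)⁻¹ʳ * (a - b)) ^ 2 * c := by
    rw [← add_mul, ← mul_add, ← sub_mul, ← mul_sub, Ring.inverse_conj hc', sq, sq]
    simp only [mul_assoc, Ring.inverse_mul_cancel_left _ _ hc',
      Ring.mul_inverse_cancel_left _ _ hc']
  have hcorr : geomMean (c * a * c) (c * b * c) *
      ((c * a * c + c * b * c)⁻¹ʳ * (c * a * c - c * b * c)) ^ 2 =
      c * (geomMean a b * ((a + b)⁻¹ʳ * (a - b)) ^ 2) * c := by
    rw [hdiff, geomMean_conj ha ha' hb hc hc']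
    simp only [mul_assoc, Ring.mul_inverse_cancel_left _ _ hc']
  have hsmul : ∀ x : H →L[ℂ] H, (1 / 2 : ℝ) • (c * x * c) = c * ((1 / 2 : ℝ) • x) * c :=
    fun x => by rw [mul_smul_comm, smul_mul_assoc]
  rw [AMGMRefinement, hcorr, geomMean_conj ha ha' hb hc hc', hsmul, ← add_mul, ← mul_add,
    ← add_mul, ← mul_add, hsmul]
  exact ⟨hc.conjugate_le_conjugate h.1, hc.conjugate_le_conjugate h.2⟩

theorem operator_amgm_refinement_general (A B : H →L[ℂ] H)
    (hA : 0 ≤ A) (hA' : IsUnit A) (hB : 0 ≤ B) :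
    geomMean A B ≤
        geomMean A B + (1 / 2 : ℝ) • (geomMean A B * (Ring.inverse (A + B) * (A - B)) ^ 2) ∧
      geomMean A B + (1 / 2 : ℝ) • (geomMean A B * (Ring.inverse (A + B) * (A - B)) ^ 2) ≤
        (1 / 2 : ℝ) • (A + B) := by
  obtain ⟨S, a, hS, hS', ha, ha', ha₁, rfl, rfl⟩ := exists_eq_conj_and_eq_conj_one_sub hA hA' hB
  exact (amgmRefinement_one_sub ha ha' ha₁).conj ha ha' (sub_nonneg.2 ha₁) hS hS'

theorem operator_amgm_refinement (A B : H →L[ℂ] H)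
    (hA : 0 ≤ A) (hA' : IsUnit A) (hB : 0 ≤ B) (hB' : IsUnit B) :
    geomMean A B ≤
        geomMean A B + (1 / 2 : ℝ) • (geomMean A B * (Ring.inverse (A + B) * (A - B)) ^ 2) ∧
      geomMean A B + (1 / 2 : ℝ) • (geomMean A B * (Ring.inverse (A + B) * (A - B)) ^ 2) ≤
        (1 / 2 : ℝ) • (A + B) :=
  operator_amgm_refinement_general A B hA hA' hB
end

section
/- Let A and B be positive invertible bounded operators on a complex Hilbert space H. Then (A + B)/2 ≤ (1/8)·(A ♯ B)·(A⁻¹B + B⁻¹A + 6·I). -/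
set_option synthInstance.maxHeartbeats 1000000
set_option maxHeartbeats 1000000

open scoped InnerProductSpace

variable {H : Type*} [NormedAddCommGroup H] [InnerProductSpace ℂ H] [CompleteSpace H]

/-!
With `S = A^(1/2)` and `T = S⁻¹ B S⁻¹` we have `A = S S`, `B = S T S`, `A ♯ B = S T^(1/2) S` and
`A⁻¹ B + B⁻¹ A + 6 = S⁻¹ (T + T⁻¹ + 6) S`, so both sides are congruences by the self-adjoint `S`
and it suffices to prove `(1 + T) / 2 ≤ T^(1/2) (T + T⁻¹ + 6) / 8` for a single strictly positive
`T`. For `s = T^(1/2)` the difference of the two sides is `(s - 1)² s⁻¹ (s - 1)² / 8 ≥ 0`, the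
operator form of `(√t - 1)⁴ / (8 √t) ≥ 0`.
-/

theorem four_mul_one_add_sq_le_of_mul_eq_one {R : Type*} [Ring R] [PartialOrder R] [StarRing R]
    [StarOrderedRing R] {s u : R} (hs : IsSelfAdjoint s) (hu : 0 ≤ u)
    (hsu : s * u = 1) (hus : u * s = 1) : 4 * (1 + s ^ 2) ≤ s * (s ^ 2 + u ^ 2 + 6) := by
  have hcomm : Commute u ((s - 1) ^ 2) :=
    ((show Commute u s from hus.trans hsu.symm).sub_right (Commute.one_right u)).pow_right 2
  have sos : s * (s ^ 2 + u ^ 2 + 6) - 4 * (1 + s ^ 2) = (s - 1) ^ 2 * u * (s - 1) ^ 2 :=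
    calc s * (s ^ 2 + u ^ 2 + 6) - 4 * (1 + s ^ 2)
        = s ^ 3 - 4 * s ^ 2 + 6 * s - 4 + s * u * u := by rw [mul_one_add]; noncomm_ring
      _ = (s ^ 4 - 4 * s ^ 3 + 6 * s ^ 2 - 4 * s + 1) * u := by
          simp only [sub_mul, add_mul, mul_assoc, one_mul, pow_succ, pow_zero, hsu, mul_one]
      _ = (s - 1) ^ 2 * u * (s - 1) ^ 2 := by
          rw [mul_assoc, hcomm.eq, ← mul_assoc, ← pow_add]; noncomm_ring
  rw [← sub_nonneg, sos]
  exact ((hs.sub (.one R)).pow 2).conjugate_nonneg hu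

theorem Units.inverse_mul_add_inverse_mul_conj {R 𝕜 : Type*} [Ring R] [SMul 𝕜 R]
    [IsScalarTower 𝕜 R R] [SMulCommClass 𝕜 R R] (s : Rˣ) {t : R} (ht : IsUnit t) (r : 𝕜) :
    Ring.inverse (s * s : R) * (s * t * s) + Ring.inverse (s * t * s) * (s * s) + r • 1 =
      ↑s⁻¹ * (t + Ring.inverse t + r • 1) * s := by
  lift t to Rˣ using ht
  simp only [← Units.val_mul, Ring.inverse_unit]
  simp only [mul_inv_rev, Units.val_mul, mul_assoc, mul_add, add_mul, Units.inv_mul_cancel_left,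
    mul_smul_comm, smul_mul_assoc, mul_one, Units.inv_mul]

section CStarAlgebra

variable {A : Type*} [CStarAlgebra A] [PartialOrder A] [StarOrderedRing A]

theorem IsStrictlyPositive.half_one_add_le {t : A} (ht : IsStrictlyPositive t) :
    (1 / 2 : ℝ) • (1 + t) ≤ (1 / 8 : ℝ) • (CFC.sqrt t * (t + Ring.inverse t + (6 : ℝ) • 1)) := by
  set s := CFC.sqrt t
  have hs : IsStrictlyPositive s := ht.sqrt
  have ht_sq : t = s ^ 2 := by rw [sq, CFC.sqrt_mul_sqrt_self t ht.nonneg]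
  have key := four_mul_one_add_sq_le_of_mul_eq_one hs.isSelfAdjoint hs.ringInverse.nonneg
    (Ring.mul_inverse_cancel s hs.isUnit) (Ring.inverse_mul_cancel s hs.isUnit)
  rw [Ring.inverse_pow, ← ht_sq] at key
  calc (1 / 2 : ℝ) • (1 + t) = (1 / 8 : ℝ) • (4 * (1 + t)) := by
        rw [← map_ofNat (algebraMap ℝ A) 4, ← Algebra.smul_def, smul_smul]; norm_num
    _ ≤ (1 / 8 : ℝ) • (s * (t + Ring.inverse t + 6)) :=
        smul_le_smul_of_nonneg_left key (by norm_num)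
    _ = (1 / 8 : ℝ) • (s * (t + Ring.inverse t + (6 : ℝ) • 1)) := by
        rw [← Algebra.algebraMap_eq_smul_one, map_ofNat]

theorem IsStrictlyPositive.exists_eq_conj {s b : A} (hs : IsStrictlyPositive s)
    (hb : IsStrictlyPositive b) :
    ∃ t, IsStrictlyPositive t ∧ b = s * t * s :=
  ⟨Ring.inverse s * b * Ring.inverse s,
    conjugate_of_isUnit_of_isSelfAdjoint b _ hs.isUnit.ringInverse hs.ringInverse.isSelfAdjoint hb,
    by simp only [mul_assoc, Ring.mul_inverse_cancel_left _ _ hs.isUnit,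
      Ring.inverse_mul_cancel _ hs.isUnit, mul_one]⟩

end CStarAlgebra

theorem geomMean_mul_self_conj {S : H →L[ℂ] H} (hS : IsStrictlyPositive S) (T : H →L[ℂ] H) :
    geomMean (S * S) (S * T * S) = S * CFC.sqrt T * S := by
  rw [geomMean, CFC.sqrt_mul_self S hS.nonneg, mul_assoc (Ring.inverse S),
    Ring.mul_inverse_cancel_right _ _ hS.isUnit, Ring.inverse_mul_cancel_left _ _ hS.isUnit]

theorem operator_reverse_amgm (A B : H →L[ℂ] H)
    (hA : 0 ≤ A) (hA' : IsUnit A) (hB : 0 ≤ B) (hB' : IsUnit B) :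
    (1 / 2 : ℝ) • (A + B) ≤
      (1 / 8 : ℝ) •
        (geomMean A B * (Ring.inverse A * B + Ring.inverse B * A + (6 : ℝ) • (1 : H →L[ℂ] H))) := by
  obtain ⟨S, hS, rfl⟩ :=
    CStarAlgebra.isStrictlyPositive_iff_exists_isStrictlyPositive_and_eq_mul_self.mp
      (hA'.isStrictlyPositive hA)
  obtain ⟨T, hT, rfl⟩ := hS.exists_eq_conj (hB'.isStrictlyPositive hB)
  have hconj := hS.isSelfAdjoint.conjugate_le_conjugate hT.half_one_add_le
  rw [geomMean_mul_self_conj hS]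
  lift S to (H →L[ℂ] H)ˣ using hS.isUnit
  rw [Units.inverse_mul_add_inverse_mul_conj S hT.isUnit]
  convert hconj using 1
  · simp only [smul_mul_assoc, mul_smul_comm, mul_add, add_mul, mul_one]
  · simp only [smul_mul_assoc, mul_smul_comm, mul_assoc, Units.mul_inv_cancel_left]
end

section
/- Let A and B be positive invertible bounded operators on a complex Hilbert space H and let m, M be real numbers with 1 < m < M such that m·B ≤ A ≤ M·B. Then (1 + (1/2)·((m − 1)/(m + 1))²)·(A ♯ B) ≤ (A + B)/2. -/
set_option synthInstance.maxHeartbeats 1000000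
set_option maxHeartbeats 1000000

open scoped InnerProductSpace

variable {H : Type*} [NormedAddCommGroup H] [InnerProductSpace ℂ H] [CompleteSpace H]

/-!
Conjugating by `A^(-1/2)` turns `m B ≤ A` into `m T ≤ 1` for `T = A^(-1/2) B A^(-1/2) ≥ 0` and
`A ♯ B` into `A^(1/2) T^(1/2) A^(1/2)`, so by the functional calculus it suffices to prove
`k √x ≤ (1 + x) / 2` for `0 ≤ m x ≤ 1`, with `k` the constant of the theorem. Writing `s = √x`,
the gap `(1 + x) / 2 - √x` is `(1 - s)² / 2`, and the constant is chosen so that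
`((m - 1) / (m + 1))² s ≤ (1 - s)²` holds at the worst point `s = 1 / √m`.
-/

open CFC Ring

lemma sq_sub_one_div_sq_add_one_sq_le {r : ℝ} (hr : 0 < r) :
    ((r ^ 2 - 1) / (r ^ 2 + 1)) ^ 2 ≤ (r - 1) ^ 2 / r := by
  rw [div_pow, div_le_div_iff₀ (by positivity) hr]
  -- `(r² + 1)² - r (r + 1)² = (r - 1)² (r² + r + 1)`
  nlinarith [mul_nonneg (mul_nonneg (sq_nonneg (r - 1)) (sq_nonneg (r - 1)))
    (show (0 : ℝ) ≤ r ^ 2 + r + 1 by positivity)]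

lemma mul_sqrt_le_half_mul_one_add {m x : ℝ} (hm : 1 ≤ m) (hx : 0 ≤ x) (hmx : m * x ≤ 1) :
    (1 + 1 / 2 * ((m - 1) / (m + 1)) ^ 2) * √x ≤ 1 / 2 * (1 + x) := by
  obtain ⟨r, hr1, rfl⟩ : ∃ r, 1 ≤ r ∧ m = r ^ 2 :=
    ⟨√m, Real.one_le_sqrt.mpr hm, (Real.sq_sqrt (by linarith)).symm⟩
  obtain ⟨s, hs, rfl⟩ : ∃ s, 0 ≤ s ∧ x = s ^ 2 := ⟨√x, Real.sqrt_nonneg x, (Real.sq_sqrt hx).symm⟩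
  have hr : 0 < r := by linarith
  have hsr : s ≤ 1 / r := by
    rw [le_div_iff₀ hr]
    nlinarith
  have hgap : ((r ^ 2 - 1) / (r ^ 2 + 1)) ^ 2 * s ≤ (1 - s) ^ 2 := calc
    ((r ^ 2 - 1) / (r ^ 2 + 1)) ^ 2 * s ≤ ((r ^ 2 - 1) / (r ^ 2 + 1)) ^ 2 * (1 / r) := by gcongr
    _ ≤ (r - 1) ^ 2 / r * (1 / r) := by gcongr; exact sq_sub_one_div_sq_add_one_sq_le hr
    _ = (1 - 1 / r) ^ 2 := by field_simp
    _ ≤ (1 - s) ^ 2 := by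
      gcongr
      rw [sub_nonneg, div_le_one hr]
      exact hr1
  rw [Real.sqrt_sq hs]
  nlinarith

lemma smul_sqrt_le_half_smul_one_add {A : Type*} [CStarAlgebra A] [PartialOrder A]
    [StarOrderedRing A] {m : ℝ} (hm : 1 ≤ m) {a : A} (ha : 0 ≤ a) (hma : m • a ≤ 1) :
    (1 + 1 / 2 * ((m - 1) / (m + 1)) ^ 2) • sqrt a ≤ (1 / 2 : ℝ) • (1 + a) := by
  have hspec : ∀ x ∈ spectrum ℝ a, m * x ≤ 1 :=
    (cfc_le_one_iff (m * ·) a).mp (by rwa [cfc_const_mul_id m a ha.isSelfAdjoint])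
  have hl : (1 + 1 / 2 * ((m - 1) / (m + 1)) ^ 2) • sqrt a =
      cfc (fun x => (1 + 1 / 2 * ((m - 1) / (m + 1)) ^ 2) * √x) a := by
    rw [sqrt_eq_real_sqrt a, cfcₙ_eq_cfc, cfc_const_mul ..]
  have hr : (1 / 2 : ℝ) • (1 + a) = cfc (fun x : ℝ => 1 / 2 * (1 + x)) a := by
    rw [cfc_const_mul .., cfc_const_add (1 : ℝ) (fun x => x) a, cfc_id' ℝ a, map_one]
  rw [hl, hr]
  exact cfc_mono fun x hx =>
    mul_sqrt_le_half_mul_one_add hm (spectrum_nonneg_of_nonneg ha hx) (hspec x hx)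

lemma geomMean_eq_conjSqrt (A B : H →L[ℂ] H) :
    geomMean A B = conjSqrt A (sqrt (conjSqrt A⁻¹ʳ B)) := by
  rw [geomMean, conjSqrt_apply, conjSqrt_apply, sqrt_ringInverse]

theorem operator_amgm_refinement_with_m_general (A B : H →L[ℂ] H) (m : ℝ)
    (hA : 0 ≤ A) (hA' : IsUnit A) (hB : 0 ≤ B)
    (hm : 1 < m) (hmB : m • B ≤ A) :
    (1 + (1 / 2) * ((m - 1) / (m + 1)) ^ 2) • geomMean A B ≤ (1 / 2 : ℝ) • (A + B) := by
  have hApos : IsStrictlyPositive A := ⟨hA, hA'⟩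
  set T := conjSqrt A⁻¹ʳ B
  have hT : 0 ≤ T := by simpa using conjSqrt_monotone (c := A⁻¹ʳ) hB
  have hmT : m • T ≤ 1 := by
    rw [← conjSqrt_ringInverse_self A, ← map_smul]
    exact conjSqrt_monotone hmB
  calc (1 + (1 / 2) * ((m - 1) / (m + 1)) ^ 2) • geomMean A B
      = conjSqrt A ((1 + (1 / 2) * ((m - 1) / (m + 1)) ^ 2) • sqrt T) := by
        rw [geomMean_eq_conjSqrt, map_smul]
    _ ≤ conjSqrt A ((1 / 2 : ℝ) • (1 + T)) :=
        conjSqrt_monotone (smul_sqrt_le_half_smul_one_add hm.le hT hmT)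
    _ = (1 / 2 : ℝ) • (A + B) := by
        rw [map_smul, map_add, conjSqrt_one A, conjSqrt_conjSqrt_ringInverse A B]

theorem operator_amgm_refinement_with_m (A B : H →L[ℂ] H) (m M : ℝ)
    (hA : 0 ≤ A) (hA' : IsUnit A) (hB : 0 ≤ B) (hB' : IsUnit B)
    (hm : 1 < m) (hmM : m < M) (hmB : m • B ≤ A) (hMB : A ≤ M • B) :
    (1 + (1 / 2) * ((m - 1) / (m + 1)) ^ 2) • geomMean A B ≤ (1 / 2 : ℝ) • (A + B) :=
  operator_amgm_refinement_with_m_general A B m hA hA' hB hm hmB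
end

section
/- Let A and B be positive invertible bounded operators on a complex Hilbert space H, and let m, m', M be positive real numbers such that 0 < m·I ≤ m'·B ≤ A ≤ M·I. Then A + m'·B ≤ (√(M·m'/m) + √(m·m'/M))·(A ♯ B). -/
set_option synthInstance.maxHeartbeats 1000000
set_option maxHeartbeats 1000000

open scoped InnerProductSpace

variable {H : Type*} [NormedAddCommGroup H] [InnerProductSpace ℂ H] [CompleteSpace H]

/-!
Conjugating by `A^(-1/2)` turns the hypotheses into `m/M ≤ T ≤ 1` for
`T = m' • A^(-1/2) B A^(-1/2)`, and the claim into `T + 1 ≤ (√(m/M) + √(M/m)) • T^(1/2)`.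
By the functional calculus this reduces to the scalar inequality `x + √(ab) ≤ (√a + √b) √x`
on `[a, b]`, i.e. `(√x - √a)(√b - √x) ≥ 0`, with `a = m/M`, `b = M/m`.
-/

open CFC Ring

theorem Real.add_sqrt_mul_le_add_mul_sqrt {a b x : ℝ} (ha : 0 ≤ a) (hax : a ≤ x) (hxb : x ≤ b) :
    x + √(a * b) ≤ (√a + √b) * √x := by
  have hax' : √a ≤ √x := Real.sqrt_le_sqrt hax
  have hxb' : √x ≤ √b := Real.sqrt_le_sqrt hxb
  rw [Real.sqrt_mul ha]
  nlinarith [mul_nonneg (sub_nonneg.2 hax') (sub_nonneg.2 hxb'), Real.sq_sqrt (ha.trans hax)]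

section CStarAlgebra

variable {A : Type*} [CStarAlgebra A] [PartialOrder A] [StarOrderedRing A]

lemma CFC.sqrt_smul {r : ℝ} {a : A} (hr : 0 ≤ r) (ha : 0 ≤ a) : sqrt (r • a) = √r • sqrt a := by
  refine sqrt_unique ?_ (smul_nonneg (Real.sqrt_nonneg r) (sqrt_nonneg a))
  rw [smul_mul_smul_comm, Real.mul_self_sqrt hr, sqrt_mul_sqrt_self a ha]

lemma spectrum_subset_Icc_inv_of_le_one {a : A} {s : ℝ} (hs : 0 < s) (ha : IsSelfAdjoint a)
    (hsa : s • 1 ≤ a) (ha1 : a ≤ 1) : spectrum ℝ a ⊆ Set.Icc s s⁻¹ := by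
  intro x hx
  have hsx : s ≤ x :=
    (algebraMap_le_iff_le_spectrum ha).1 (by rwa [Algebra.algebraMap_eq_smul_one]) x hx
  have hx1 : x ≤ 1 := (le_algebraMap_iff_spectrum_le ha).1 (by rwa [map_one]) x hx
  exact ⟨hsx, hx1.trans (one_le_inv_iff₀.2 ⟨hs, hsx.trans hx1⟩)⟩

lemma add_algebraMap_sqrt_mul_le_smul_sqrt {a : A} {s t : ℝ} (ha : 0 ≤ a) (hs : 0 ≤ s)
    (hspec : spectrum ℝ a ⊆ Set.Icc s t) :
    a + algebraMap ℝ A √(s * t) ≤ (√s + √t) • sqrt a := by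
  have key : cfc (fun x => x + √(s * t)) a ≤ cfc (fun x => (√s + √t) * √x) a :=
    cfc_mono fun x hx => Real.add_sqrt_mul_le_add_mul_sqrt hs (hspec hx).1 (hspec hx).2
  rwa [cfc_add_const _ _ a, cfc_id' ℝ a, cfc_const_mul _ _ a, ← cfcₙ_eq_cfc,
    ← sqrt_eq_real_sqrt a] at key

end CStarAlgebra

theorem operator_sum_le_geomMean_general (A B : H →L[ℂ] H) (m m' M : ℝ)
    (hA : 0 ≤ A) (hA' : IsUnit A) (hB : 0 ≤ B)
    (hm : 0 < m) (hm' : 0 < m') (hM : 0 < M)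
    (h1 : m • (1 : H →L[ℂ] H) ≤ m' • B) (h2 : m' • B ≤ A) (h3 : A ≤ M • (1 : H →L[ℂ] H)) :
    A + m' • B ≤ (Real.sqrt (M * m' / m) + Real.sqrt (m * m' / M)) • geomMean A B := by
  have hApos : IsStrictlyPositive A := hA'.isStrictlyPositive hA
  set T := conjSqrt A⁻¹ʳ B
  have hT : 0 ≤ T := map_zero (conjSqrt A⁻¹ʳ) ▸ conjSqrt_le_conjSqrt hB
  have hT_le : m' • T ≤ 1 := by
    simpa only [map_smul, conjSqrt_ringInverse_self A hApos] using
      conjSqrt_le_conjSqrt (c := A⁻¹ʳ) h2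
  have hle_T : (m / M) • 1 ≤ m' • T := by
    have hAB : (m / M) • A ≤ m' • B := calc
      (m / M) • A ≤ (m / M) • M • (1 : H →L[ℂ] H) := smul_le_smul_of_nonneg_left h3 (by positivity)
      _ = m • 1 := by rw [smul_smul, div_mul_cancel₀ m hM.ne']
      _ ≤ m' • B := h1
    simpa only [map_smul, conjSqrt_ringInverse_self A hApos] using
      conjSqrt_le_conjSqrt (c := A⁻¹ʳ) hAB
  have key := add_algebraMap_sqrt_mul_le_smul_sqrt (smul_nonneg hm'.le hT) (by positivity)
    (spectrum_subset_Icc_inv_of_le_one (by positivity) (.of_nonneg (smul_nonneg hm'.le hT))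
      hle_T hT_le)
  have hcoeff : (√(m / M) + √(m / M)⁻¹) * √m' = √(M * m' / m) + √(m * m' / M) := by
    rw [inv_div, add_mul, ← Real.sqrt_mul (by positivity), ← Real.sqrt_mul (by positivity),
      add_comm]
    ring_nf
  calc A + m' • B = conjSqrt A (m' • T + algebraMap ℝ _ √(m / M * (m / M)⁻¹)) := by
        rw [mul_inv_cancel₀ (by positivity), Real.sqrt_one, map_one, map_add, map_smul,
          conjSqrt_conjSqrt_ringInverse A B hApos, conjSqrt_one A hA, add_comm]
    _ ≤ conjSqrt A ((√(m / M) + √(m / M)⁻¹) • sqrt (m' • T)) := conjSqrt_le_conjSqrt key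
    _ = _ := by rw [sqrt_smul hm'.le hT, smul_smul, map_smul, ← geomMean_eq_conjSqrt, hcoeff]

theorem operator_sum_le_geomMean (A B : H →L[ℂ] H) (m m' M : ℝ)
    (hA : 0 ≤ A) (hA' : IsUnit A) (hB : 0 ≤ B) (hB' : IsUnit B)
    (hm : 0 < m) (hm' : 0 < m') (hM : 0 < M)
    (h1 : m • (1 : H →L[ℂ] H) ≤ m' • B) (h2 : m' • B ≤ A) (h3 : A ≤ M • (1 : H →L[ℂ] H)) :
    A + m' • B ≤ (Real.sqrt (M * m' / m) + Real.sqrt (m * m' / M)) • geomMean A B :=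
  operator_sum_le_geomMean_general A B m m' M hA hA' hB hm hm' hM h1 h2 h3
end

section
/- The function f : (0, ∞) → ℝ defined by f(x) = √x·(1 + (1/8)·(ln x)²) is concave on (0, ∞). -/
/-!
Write `f(x) = x ^ (1/2) · φ(log x)` with `φ(t) = 1 + t² / 8`. Differentiating `x ^ a · φ(log x)`
gives `x ^ (a - 1) · (a φ + φ')(log x)`, so two applications of this rule give
`f''(x) = x ^ (-3/2) · (-(log x)² / 32) ≤ 0`. With `c t²` in place of `t² / 8` the second factor
would be `2c - 1/4 - c (log x)² / 4`, so `1/8` is the largest admissible coefficient.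
-/

open Real Set

lemma hasDerivAt_rpow_mul_comp_log {a x φ' : ℝ} {φ : ℝ → ℝ} (hx : 0 < x)
    (hφ : HasDerivAt φ φ' (log x)) :
    HasDerivAt (fun y => y ^ a * φ (log y)) (x ^ (a - 1) * (a * φ (log x) + φ')) x := by
  refine ((hasDerivAt_rpow_const (p := a) (Or.inl hx.ne')).mul
    (hφ.comp x (hasDerivAt_log hx.ne'))).congr_deriv ?_
  rw [rpow_sub_one hx.ne', Function.comp_apply]
  field_simp

lemma concaveOn_Ioi_of_hasDerivAt2_nonpos {a : ℝ} {f f' f'' : ℝ → ℝ}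
    (hf : ∀ x ∈ Ioi a, HasDerivAt f (f' x) x) (hf' : ∀ x ∈ Ioi a, HasDerivAt f' (f'' x) x)
    (hf'' : ∀ x ∈ Ioi a, f'' x ≤ 0) : ConcaveOn ℝ (Ioi a) f := by
  refine concaveOn_of_hasDerivWithinAt2_nonpos (f' := f') (f'' := f'') (convex_Ioi a)
    (fun x hx => (hf x hx).continuousAt.continuousWithinAt) ?_ ?_ ?_ <;> rw [interior_Ioi]
  exacts [fun x hx => (hf x hx).hasDerivWithinAt, fun x hx => (hf' x hx).hasDerivWithinAt, hf'']

theorem concaveOn_sqrt_log :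
    ConcaveOn ℝ (Set.Ioi (0 : ℝ))
      (fun x : ℝ => Real.sqrt x * (1 + (1 / 8) * (Real.log x) ^ 2)) := by
  simp only [sqrt_eq_rpow]
  refine concaveOn_Ioi_of_hasDerivAt2_nonpos
    (f' := fun x => x ^ (-1 / 2 : ℝ) * (1 / 2 + log x / 4 + log x ^ 2 / 16))
    (f'' := fun x => x ^ (-3 / 2 : ℝ) * (-log x ^ 2 / 32)) (fun x hx => ?_) (fun x hx => ?_)
    (fun x hx => mul_nonpos_of_nonneg_of_nonpos (rpow_nonneg (le_of_lt hx) _) (by nlinarith))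
  · have hφ : HasDerivAt (fun t => 1 + 1 / 8 * t ^ 2) (log x / 4) (log x) := by
      refine (((hasDerivAt_pow 2 (log x)).const_mul (1 / 8 : ℝ)).const_add 1).congr_deriv ?_
      norm_num
      ring
    convert hasDerivAt_rpow_mul_comp_log (a := 1 / 2) hx hφ using 1
    rw [show (1 / 2 : ℝ) - 1 = -1 / 2 by norm_num]
    ring
  · have hψ : HasDerivAt (fun t => 1 / 2 + t / 4 + t ^ 2 / 16) (1 / 4 + log x / 8) (log x) := by
      refine ((((hasDerivAt_id' (log x)).div_const 4).const_add (1 / 2 : ℝ)).add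
        ((hasDerivAt_pow 2 (log x)).div_const 16)).congr_deriv ?_
      norm_num
      ring
    convert hasDerivAt_rpow_mul_comp_log (a := -1 / 2) hx hψ using 1
    rw [show (-1 / 2 : ℝ) - 1 = -3 / 2 by norm_num]
    ring
end
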